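/- arXiv:1404.3458 — 2 statements merged into one kernel-verified Lean document; each statement's English description precedes it below -/
import Mathlib

section
/- Let h = 2^t with 1 ≤ t ≤ r and let d_0, …, d_{h−1} ∈ F. Set d_i^d := d_i · ∏_{j ∈ I_i} W'_j for 0 ≤ i < h, where I_i = {l : 0 ≤ l ≤ t−1 and bit l of i equals 1}. Then the formal derivative of Σ_{i=0}^{h−1} d_i·X_i equals Σ_{j=0}^{h−1} ((Σ_{l ∈ I_j^c} d_{j+2^l}^d) / (∏_{m ∈ I_j} W'_m)) · X_j, where I_j^c = {l : 0 ≤ l ≤ t−1 and bit l of j equals 0}; here each W'_m is nonzero so the division is well defined. -/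
/-!
In characteristic 2 the subspace polynomials are additive, `W_l(X + y) = W_l(X) + W_l(y)`, so
`W_{l+1} = W_l · W_l(X + v_l) = W_l · (W_l + W_l(v_l))` and, by induction, `W_l'` is the constant
`∏_{0<j<2^l} ω_j`. Differentiating the product `X_i` factor by factor then gives
`X_i' = Σ_{l ∈ I_i} W'_l · X_{i-2^l}`; substituting `i = j + 2^l` collects the coefficient of `X_j`,
and the normalisation in `d^d` cancels against `∏_{m ∈ I_j} W'_m` because `I_{j+2^l} = I_j ∪ {l}`.
The constants `W'_l` are nonzero since linear independence makes every `ω_j` with `0 < j < 2^r`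
nonzero, and `W_l(ω_{2^l}) = ∏_{2^l ≤ j < 2^{l+1}} ω_j`.
-/

open Polynomial Finset

attribute [local instance] ZMod.algebra

/-- `ω_i = Σ_{j<r} i_j · v_j`, where `i_j` are the binary digits of `i`. -/
noncomputable def omegaF {F : Type*} [Field F] {r : ℕ} (v : Fin r → F) (i : ℕ) : F :=
  ∑ j : Fin r, if Nat.testBit i (j : ℕ) then v j else 0

/-- The subspace vanishing polynomial `W_j(X) = ∏_{i=0}^{2^j-1} (X - ω_i)`. -/
noncomputable def Wpoly {F : Type*} [Field F] {r : ℕ} (v : Fin r → F) (j : ℕ) : Polynomial F :=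
  ∏ i ∈ Finset.range (2 ^ j), (Polynomial.X - Polynomial.C (omegaF v i))

/-- The basis polynomial `X_i(X) = ∏_{j<r} (W_j(X)/W_j(ω_{2^j}))^{i_j}`. -/
noncomputable def Xpoly {F : Type*} [Field F] {r : ℕ} (v : Fin r → F) (i : ℕ) : Polynomial F :=
  ∏ j ∈ Finset.range r,
    if Nat.testBit i j then
      Polynomial.C (((Wpoly v j).eval (omegaF v (2 ^ j)))⁻¹) * Wpoly v j
    else 1

/-- The recursively defined polynomials `Δ_i^m`:
`Δ_t^m = C (d m)` and `Δ_i^m = Δ_{i+1}^m + (W_i/W_i(ω_{2^i})) · Δ_{i+1}^{m+2^i}` for `i < t`. -/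
noncomputable def Delta {F : Type*} [Field F] {r : ℕ} (v : Fin r → F) (d : ℕ → F)
    (t i m : ℕ) : Polynomial F :=
  if i < t then
    Delta v d t (i + 1) m +
      Polynomial.C (((Wpoly v i).eval (omegaF v (2 ^ i)))⁻¹) * Wpoly v i *
        Delta v d t (i + 1) (m + 2 ^ i)
  else Polynomial.C (d m)
termination_by t - i
decreasing_by all_goals omega

/-- The constant `W'_l = (∏_{j=1}^{2^l-1} ω_j) / W_l(ω_{2^l})`. -/
noncomputable def Wd {F : Type*} [Field F] {r : ℕ} (v : Fin r → F) (l : ℕ) : F :=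
  (∏ j ∈ Finset.Ico 1 (2 ^ l), omegaF v j) / (Wpoly v l).eval (omegaF v (2 ^ l))

/-- `d_i^d = d_i · ∏_{j ∈ I_i} W'_j`, where `I_i` is the set of `0 ≤ l ≤ t-1` with
bit `l` of `i` equal to `1`. -/
noncomputable def dDeriv {F : Type*} [Field F] {r : ℕ} (v : Fin r → F) (d : ℕ → F)
    (t i : ℕ) : F :=
  d i * ∏ l ∈ Finset.range t, if Nat.testBit i l then Wd v l else 1

theorem Nat.testBit_add_two_pow {i l : ℕ} (h : i.testBit l = false) (m : ℕ) :
    (i + 2 ^ l).testBit m = (decide (m = l) || i.testBit m) := by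
  induction l generalizing i m with
  | zero =>
    simp only [Nat.testBit_zero, decide_eq_false_iff_not] at h
    cases m with
    | zero => simp [Nat.testBit_zero]; omega
    | succ k =>
      rw [Nat.testBit_succ, Nat.testBit_succ, show (i + 2 ^ 0) / 2 = i / 2 by omega]
      simp
  | succ l ih =>
    cases m with
    | zero => simp [Nat.testBit_zero, pow_succ]
    | succ k =>
      rw [Nat.testBit_succ, Nat.testBit_succ, show (i + 2 ^ (l + 1)) / 2 = i / 2 + 2 ^ l by omega,
        ih (by rwa [Nat.testBit_div_two])]
      simp

theorem Nat.testBit_sub_two_pow_self {i l : ℕ} (h : i.testBit l = true) :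
    (i - 2 ^ l).testBit l = false := by
  have hle := Nat.ge_two_pow_of_testBit h
  have h2 := Nat.testBit_two_pow_add_eq (i - 2 ^ l) l
  rw [Nat.add_sub_cancel' hle, h] at h2
  simpa using h2.symm

theorem Nat.add_two_pow_lt_two_pow {j l t : ℕ} (hj : j < 2 ^ t) (hl : l < t)
    (h : j.testBit l = false) : j + 2 ^ l < 2 ^ t := by
  refine Nat.lt_pow_two_of_testBit _ fun m hm => ?_
  rw [Nat.testBit_add_two_pow h, decide_eq_false (by omega), Bool.false_or]
  exact Nat.testBit_lt_two_pow (hj.trans_le (Nat.pow_le_pow_right two_pos hm))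

theorem Finset.sum_filter_testBit_eq {M : Type*} [AddCommMonoid M] (f : ℕ → M) {l t : ℕ}
    (hl : l < t) :
    ∑ i ∈ (range (2 ^ t)).filter (·.testBit l), f i
      = ∑ j ∈ (range (2 ^ t)).filter (fun j => ¬ j.testBit l), f (j + 2 ^ l) := by
  symm
  refine sum_nbij' (· + 2 ^ l) (· - 2 ^ l) ?_ ?_ ?_ ?_ fun j _ => rfl
  · intro j hj
    simp only [mem_filter, mem_range, Bool.not_eq_true] at hj ⊢
    exact ⟨Nat.add_two_pow_lt_two_pow hj.1 hl hj.2, by simp [Nat.testBit_add_two_pow hj.2]⟩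
  · intro i hi
    simp only [mem_filter, mem_range, Bool.not_eq_true] at hi ⊢
    exact ⟨lt_of_le_of_lt (Nat.sub_le _ _) hi.1, Nat.testBit_sub_two_pow_self hi.2⟩
  · intro j _
    simp
  · intro i hi
    simp only [mem_filter, mem_range] at hi
    exact Nat.sub_add_cancel (Nat.ge_two_pow_of_testBit hi.2)

theorem Finset.prod_range_ite_testBit_add_two_pow {M : Type*} [CommMonoid M] (g : ℕ → M)
    {j l t : ℕ} (hl : l < t) (h : j.testBit l = false) :
    ∏ m ∈ range t, (if (j + 2 ^ l).testBit m then g m else 1)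
      = g l * ∏ m ∈ range t, (if j.testBit m then g m else 1) := by
  have hsplit : ∀ m, (if (j + 2 ^ l).testBit m then g m else 1)
      = (if m = l then g m else 1) * (if j.testBit m then g m else 1) := by
    intro m
    rw [Nat.testBit_add_two_pow h]
    by_cases hm : m = l
    · subst hm; simp [h]
    · simp [hm]
  rw [prod_congr rfl fun m _ => hsplit m, prod_mul_distrib, prod_ite_eq' (range t) l,
    if_pos (mem_range.2 hl)]

section omegaF

variable {F : Type*} [Field F] {r : ℕ} (v : Fin r → F)

theorem omegaF_zero : omegaF v 0 = 0 := by
  simp [omegaF]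

theorem omegaF_two_pow {l : ℕ} (hl : l < r) : omegaF v (2 ^ l) = v ⟨l, hl⟩ := by
  simp only [omegaF, Nat.testBit_two_pow, decide_eq_true_eq]
  rw [Fintype.sum_eq_single ⟨l, hl⟩ fun j hj => if_neg fun h => hj (Fin.ext h.symm), if_pos rfl]

theorem omegaF_add_two_pow {i l : ℕ} (hl : l < r) (h : i.testBit l = false) :
    omegaF v (i + 2 ^ l) = omegaF v i + v ⟨l, hl⟩ := by
  have hsplit : ∀ j : Fin r, (if (i + 2 ^ l).testBit j then v j else 0)
      = (if i.testBit j then v j else 0) + (if j = ⟨l, hl⟩ then v j else 0) := by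
    intro j
    rw [Nat.testBit_add_two_pow h]
    by_cases hj : (j : ℕ) = l
    · simp [hj, h, Fin.ext_iff]
    · simp [hj, Fin.ext_iff]
  simp [omegaF, hsplit, sum_add_distrib]

theorem omegaF_ne_zero [CharP F 2] (hv : LinearIndependent (ZMod 2) v) {k : ℕ} (hk0 : k ≠ 0)
    (hk : k < 2 ^ r) : omegaF v k ≠ 0 := by
  intro hzero
  have hcoeff := Fintype.linearIndependent_iff.1 hv (fun j => if k.testBit j then 1 else 0)
    (by rw [← hzero]; exact sum_congr rfl fun j _ => by split_ifs <;> simp)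
  refine hk0 (Nat.eq_of_testBit_eq fun m => ?_)
  rw [Nat.zero_testBit]
  by_cases hm : m < r
  · simpa using hcoeff ⟨m, hm⟩
  · exact Nat.testBit_lt_two_pow (hk.trans_le (Nat.pow_le_pow_right two_pos (by omega)))

end omegaF

section Wpoly

variable {F : Type*} [Field F] {r : ℕ} (v : Fin r → F)

theorem Wpoly_zero : Wpoly v 0 = X := by
  simp [Wpoly, omegaF_zero]

variable [CharP F 2]

theorem eval_Wpoly_eq_prod_Ico {l : ℕ} (hl : l < r) :
    (Wpoly v l).eval (v ⟨l, hl⟩) = ∏ j ∈ Ico (2 ^ l) (2 ^ (l + 1)), omegaF v j := by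
  rw [prod_Ico_eq_prod_range, Nat.pow_succ, Nat.mul_two, Nat.add_sub_cancel]
  simp only [Wpoly, eval_prod, eval_sub, eval_X, eval_C]
  refine prod_congr rfl fun i hi => ?_
  rw [add_comm, omegaF_add_two_pow v hl (Nat.testBit_lt_two_pow (mem_range.1 hi)),
    sub_eq_add_neg, CharTwo.neg_eq, add_comm]

theorem Wpoly_succ {l : ℕ} (hl : l < r) :
    Wpoly v (l + 1) = Wpoly v l * (Wpoly v l).comp (X + C (v ⟨l, hl⟩)) := by
  rw [Wpoly, Nat.pow_succ, Nat.mul_two, prod_range_add, Wpoly, Polynomial.prod_comp]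
  congr 1
  refine prod_congr rfl fun i hi => ?_
  rw [sub_comp, X_comp, C_comp, add_comm (2 ^ l),
    omegaF_add_two_pow v hl (Nat.testBit_lt_two_pow (mem_range.1 hi)), C_add]
  linear_combination (-C (v ⟨l, hl⟩)) * (CharTwo.two_eq_zero : (2 : F[X]) = 0)

theorem Wpoly_comp_X_add_C {l : ℕ} (hl : l ≤ r) (y : F) :
    (Wpoly v l).comp (X + C y) = Wpoly v l + C ((Wpoly v l).eval y) := by
  induction l generalizing y with
  | zero => simp [Wpoly_zero]
  | succ l ih =>
    have hsucc : Wpoly v (l + 1) = Wpoly v l * (Wpoly v l + C ((Wpoly v l).eval (v ⟨l, hl⟩))) := by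
      rw [Wpoly_succ v hl, ih (by omega)]
    rw [hsucc, mul_comp, add_comp, C_comp, ih (by omega) y, eval_mul, eval_add, eval_C]
    simp only [map_mul, map_add]
    linear_combination (Wpoly v l * C ((Wpoly v l).eval y)) *
      (CharTwo.two_eq_zero : (2 : F[X]) = 0)

theorem Wpoly_succ_eq_mul_add_C {l : ℕ} (hl : l < r) :
    Wpoly v (l + 1) = Wpoly v l * (Wpoly v l + C ((Wpoly v l).eval (v ⟨l, hl⟩))) := by
  rw [Wpoly_succ v hl, Wpoly_comp_X_add_C v hl.le]

theorem derivative_Wpoly {l : ℕ} (hl : l ≤ r) :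
    derivative (Wpoly v l) = C (∏ j ∈ Ico 1 (2 ^ l), omegaF v j) := by
  induction l with
  | zero => simp [Wpoly_zero]
  | succ l ih =>
    have hl' : l < r := hl
    rw [← prod_Ico_consecutive _ Nat.one_le_two_pow (Nat.pow_le_pow_right two_pos l.le_succ),
      ← eval_Wpoly_eq_prod_Ico v hl', Wpoly_succ_eq_mul_add_C v hl', derivative_mul,
      derivative_add, derivative_C, add_zero, ih hl'.le, map_mul]
    linear_combination (Wpoly v l * C (∏ j ∈ Ico 1 (2 ^ l), omegaF v j)) *
      (CharTwo.two_eq_zero : (2 : F[X]) = 0)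

theorem prod_Ico_omegaF_ne_zero (hv : LinearIndependent (ZMod 2) v) {a b : ℕ} (ha : 1 ≤ a)
    (hb : b ≤ 2 ^ r) : ∏ j ∈ Ico a b, omegaF v j ≠ 0 :=
  prod_ne_zero_iff.2 fun j hj => by
    rw [mem_Ico] at hj
    exact omegaF_ne_zero v hv (by omega) (by omega)

theorem Wd_ne_zero (hv : LinearIndependent (ZMod 2) v) {l : ℕ} (hl : l < r) : Wd v l ≠ 0 := by
  refine div_ne_zero
    (prod_Ico_omegaF_ne_zero v hv le_rfl (Nat.pow_le_pow_right two_pos hl.le)) ?_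
  rw [omegaF_two_pow v hl, eval_Wpoly_eq_prod_Ico v hl]
  exact prod_Ico_omegaF_ne_zero v hv Nat.one_le_two_pow (Nat.pow_le_pow_right two_pos hl)

theorem sum_dDeriv_div_prod_Wd (hv : LinearIndependent (ZMod 2) v) {t : ℕ} (htr : t ≤ r)
    (d : ℕ → F) (j : ℕ) :
    (∑ l ∈ range t, if j.testBit l then 0 else dDeriv v d t (j + 2 ^ l))
        / (∏ m ∈ range t, if j.testBit m then Wd v m else 1)
      = ∑ l ∈ range t, if j.testBit l then 0 else d (j + 2 ^ l) * Wd v l := by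
  have hP : ∏ m ∈ range t, (if j.testBit m then Wd v m else 1) ≠ 0 :=
    prod_ne_zero_iff.2 fun m hm => by
      split_ifs
      exacts [Wd_ne_zero v hv ((mem_range.1 hm).trans_le htr), one_ne_zero]
  rw [div_eq_iff hP, sum_mul]
  refine sum_congr rfl fun l hl => ?_
  split_ifs with hj
  · exact (zero_mul _).symm
  · rw [dDeriv, prod_range_ite_testBit_add_two_pow _ (mem_range.1 hl) (by simpa using hj)]
    ring

theorem derivative_Xpoly (i : ℕ) :
    derivative (Xpoly v i)
      = ∑ l ∈ range r, if i.testBit l then C (Wd v l) * Xpoly v (i - 2 ^ l) else 0 := by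
  rw [Xpoly, derivative_prod_finset]
  refine sum_congr rfl fun l hl => ?_
  by_cases hi : i.testBit l
  · have hsub : (i - 2 ^ l).testBit l = false := Nat.testBit_sub_two_pow_self hi
    have hbits : ∀ m ≠ l, (i - 2 ^ l).testBit m = i.testBit m := fun m hm => by
      conv_rhs => rw [← Nat.sub_add_cancel (Nat.ge_two_pow_of_testBit hi)]
      simp [Nat.testBit_add_two_pow hsub, hm]
    have hX : Xpoly v (i - 2 ^ l) = ∏ m ∈ (range r).erase l,
        if i.testBit m then C ((Wpoly v m).eval (omegaF v (2 ^ m)))⁻¹ * Wpoly v m else 1 := by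
      rw [Xpoly, ← prod_erase (range r) (a := l) (by simp [hsub])]
      exact prod_congr rfl fun m hm => by rw [hbits m (ne_of_mem_erase hm)]
    rw [if_pos hi, if_pos hi, derivative_C_mul, derivative_Wpoly v (mem_range.1 hl).le, hX,
      Wd, div_eq_inv_mul, C_mul]
    ring
  · rw [if_neg hi, if_neg hi, derivative_one, mul_zero]

theorem derivative_Xpoly_of_lt_two_pow {i t : ℕ} (hi : i < 2 ^ t) (htr : t ≤ r) :
    derivative (Xpoly v i)
      = ∑ l ∈ range t, if i.testBit l then C (Wd v l) * Xpoly v (i - 2 ^ l) else 0 := by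
  rw [derivative_Xpoly]
  refine (sum_subset (range_subset_range.2 htr) fun l _ hl => ?_).symm
  have hbit : i.testBit l = false :=
    Nat.testBit_lt_two_pow (hi.trans_le (Nat.pow_le_pow_right two_pos (by simpa using hl)))
  simp [hbit]

end Wpoly

theorem statement14_general (r : ℕ) (hr : 1 ≤ r) (F : Type*) [Field F] [CharP F 2]
    (v : Fin r → F)
    (hv : LinearIndependent (ZMod 2) v) (t : ℕ) (htr : t ≤ r) (d : ℕ → F) :
    (∀ l ≤ r - 1, Wd v l ≠ 0)
    ∧ Polynomial.derivative (∑ i ∈ Finset.range (2 ^ t), Polynomial.C (d i) * Xpoly v i)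
      = ∑ j ∈ Finset.range (2 ^ t),
          Polynomial.C
              ((∑ l ∈ Finset.range t, if Nat.testBit j l then 0 else dDeriv v d t (j + 2 ^ l))
                / (∏ m ∈ Finset.range t, if Nat.testBit j m then Wd v m else 1))
            * Xpoly v j := by
  refine ⟨fun l hl => Wd_ne_zero v hv (by omega), ?_⟩
  calc derivative (∑ i ∈ range (2 ^ t), C (d i) * Xpoly v i)
      = ∑ l ∈ range t, ∑ i ∈ (range (2 ^ t)).filter (·.testBit l),
          C (d i * Wd v l) * Xpoly v (i - 2 ^ l) := by
        simp only [derivative_sum, derivative_C_mul, sum_filter]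
        rw [sum_congr rfl fun i hi => by
          rw [derivative_Xpoly_of_lt_two_pow v (mem_range.1 hi) htr, mul_sum], sum_comm]
        simp only [mul_ite, mul_zero, C_mul, mul_assoc]
    _ = ∑ l ∈ range t, ∑ j ∈ (range (2 ^ t)).filter (fun j => ¬ j.testBit l),
          C (d (j + 2 ^ l) * Wd v l) * Xpoly v j := by
        refine sum_congr rfl fun l hl => ?_
        rw [sum_filter_testBit_eq _ (mem_range.1 hl)]
        simp only [Nat.add_sub_cancel]
    _ = ∑ j ∈ range (2 ^ t),
          C (∑ l ∈ range t, if j.testBit l then 0 else d (j + 2 ^ l) * Wd v l) * Xpoly v j := by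
        simp only [sum_filter, map_sum, sum_mul, apply_ite C, map_zero, ite_mul, zero_mul, ite_not]
        exact sum_comm
    _ = _ := by simp only [sum_dDeriv_div_prod_Wd v hv htr]

/-- With `h = 2^t`, `d_i^d := d_i · ∏_{j ∈ I_i} W'_j`, each `W'_m` is nonzero and
the formal derivative of `Σ_{i<h} d_i · X_i` equals
`Σ_{j<h} ((Σ_{l ∈ I_j^c} d_{j+2^l}^d) / (∏_{m ∈ I_j} W'_m)) · X_j`. -/
theorem statement14 (r : ℕ) (hr : 1 ≤ r) (F : Type*) [Field F] [Fintype F] [CharP F 2]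
    (hcard : Fintype.card F = 2 ^ r) (v : Fin r → F)
    (hv : LinearIndependent (ZMod 2) v) (t : ℕ) (ht1 : 1 ≤ t) (htr : t ≤ r) (d : ℕ → F) :
    (∀ l ≤ r - 1, Wd v l ≠ 0)
    ∧ Polynomial.derivative (∑ i ∈ Finset.range (2 ^ t), Polynomial.C (d i) * Xpoly v i)
      = ∑ j ∈ Finset.range (2 ^ t),
          Polynomial.C
              ((∑ l ∈ Finset.range t, if Nat.testBit j l then 0 else dDeriv v d t (j + 2 ^ l))
                / (∏ m ∈ Finset.range t, if Nat.testBit j m then Wd v m else 1))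
            * Xpoly v j :=
  statement14_general r hr F v hv t htr d
end

section
/- Invertibility of the transform Ψ_h^l: for h = 2^t with 1 ≤ t ≤ r and any 0 ≤ l < 2^r, the F-linear map from F^h to F^h sending (d_0, …, d_{h−1}) to the evaluation vector ((Σ_{i=0}^{h−1} d_i·X_i)(ω_j + ω_l))_{j=0}^{h−1} is bijective. -/
open Polynomial Finset

attribute [local instance] ZMod.algebra

/-! `X_i` has degree exactly `i`: its factors `W_j` have degree `2^j`, and `i` is the sum of `2^j`
over its binary digits. Hence `X_0, …, X_{h-1}` are linearly independent polynomials of degree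
`< h`. As `v` is linearly independent over `𝔽₂`, the points `ω_j + ω_l` (`j < h`) are distinct, and
a polynomial of degree `< h` vanishing at `h` distinct points is zero. So the linear map is
injective, hence bijective. -/

namespace Polynomial

variable {K ι : Type*} [Field K]

theorem linearIndependent_of_degree_injective {p : ι → K[X]} (hp : ∀ i, p i ≠ 0)
    (hdeg : Function.Injective (degree ∘ p)) : LinearIndependent K p := by
  refine linearIndependent_iff'.mpr fun s g hsum i hi => ?_
  have hdisjoint : Set.Pairwise {j | j ∈ s ∧ g j • p j ≠ 0}
      (Function.onFun Ne (degree ∘ fun j => g j • p j)) := by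
    rintro a ⟨-, ha⟩ b ⟨-, hb⟩ hab
    simp only [Function.onFun, Function.comp_apply, smul_eq_C_mul,
      degree_C_mul (left_ne_zero_of_smul ha), degree_C_mul (left_ne_zero_of_smul hb)]
    exact hdeg.ne hab
  have hsup := degree_sum_eq_of_disjoint _ s hdisjoint
  rw [hsum, degree_zero, eq_comm, Finset.sup_eq_bot_iff] at hsup
  simpa [hp i] using hsup i hi

theorem bijective_eval_sum_C_mul [Fintype ι] {p : ι → K[X]} (hp : LinearIndependent K p)
    (hdeg : ∀ i, (p i).natDegree < Fintype.card ι) {x : ι → K} (hx : Function.Injective x) :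
    Function.Bijective (fun d : ι → K => fun j => (∑ i, C (d i) * p i).eval (x j)) := by
  let Ψ : (ι → K) →ₗ[K] ι → K :=
    LinearMap.pi (fun j => leval (x j)) ∘ₗ Fintype.linearCombination K p
  have hΨ : ⇑Ψ = fun d j => (∑ i, C (d i) * p i).eval (x j) := by
    ext d j
    simp [Ψ, Fintype.linearCombination_apply, smul_eq_C_mul, eval_finsetSum]
  have hinj : Function.Injective Ψ := by
    refine (injective_iff_map_eq_zero Ψ).mpr fun d hd => ?_
    ext i
    have hcard : 0 < Fintype.card ι := Fintype.card_pos_iff.mpr ⟨i⟩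
    refine Fintype.linearIndependent_iff.mp hp d ?_ i
    refine eq_zero_of_natDegree_lt_card_of_eval_eq_zero _ hx (fun j => ?_) ?_
    · simpa [Ψ, Fintype.linearCombination_apply, eval_finsetSum] using congrFun hd j
    · exact (natDegree_sum_le_of_forall_le _ _ fun i _ => (natDegree_smul_le _ _).trans
        (Nat.le_sub_one_of_lt (hdeg i))).trans_lt (Nat.sub_one_lt_of_lt hcard)
  exact hΨ ▸ ⟨hinj, LinearMap.injective_iff_surjective.mp hinj⟩

end Polynomial

theorem Nat.lt_of_mem_bitIndices {i j r : ℕ} (hi : i < 2 ^ r) (hj : j ∈ i.bitIndices) : j < r :=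
  (Nat.pow_lt_pow_iff_right one_lt_two).mp ((Nat.two_pow_le_of_mem_bitIndices hj).trans_lt hi)

section NovelPolynomialBasis

variable {F : Type*} [Field F] {r : ℕ} {v : Fin r → F}

theorem omegaF_eq_sum_smul [CharP F 2] (v : Fin r → F) (i : ℕ) :
    omegaF v i = ∑ j : Fin r, (if i.testBit j then 1 else 0 : ZMod 2) • v j := by
  simp [omegaF, ite_smul]

theorem testBit_eq_of_omegaF_eq [CharP F 2] (hv : LinearIndependent (ZMod 2) v) {a b : ℕ}
    (h : omegaF v a = omegaF v b) (j : Fin r) : a.testBit j = b.testBit j := by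
  have := Fintype.linearIndependent_iffₛ.mp hv _ _
    (by simpa only [omegaF_eq_sum_smul] using h) j
  revert this
  cases a.testBit j <;> cases b.testBit j <;> decide

theorem omegaF_injOn [CharP F 2] (hv : LinearIndependent (ZMod 2) v) :
    Set.InjOn (omegaF v) (Set.Iio (2 ^ r)) := by
  intro a ha b hb h
  refine Nat.eq_of_testBit_eq fun j => ?_
  by_cases hj : j < r
  · exact testBit_eq_of_omegaF_eq hv h ⟨j, hj⟩
  · have hrj : 2 ^ r ≤ 2 ^ j := Nat.pow_le_pow_right two_pos (not_lt.mp hj)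
    rw [Nat.testBit_eq_false_of_lt (lt_of_lt_of_le ha hrj),
      Nat.testBit_eq_false_of_lt (lt_of_lt_of_le hb hrj)]

theorem Wpoly_monic (v : Fin r → F) (j : ℕ) : (Wpoly v j).Monic :=
  monic_prod_of_monic _ _ fun _ _ => monic_X_sub_C _

theorem Wpoly_natDegree (v : Fin r → F) (j : ℕ) : (Wpoly v j).natDegree = 2 ^ j := by
  rw [Wpoly, natDegree_prod_of_monic _ _ fun _ _ => monic_X_sub_C _]
  simp

theorem Wpoly_eval_ne_zero [CharP F 2] (hv : LinearIndependent (ZMod 2) v) {j : ℕ} (hj : j < r) :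
    (Wpoly v j).eval (omegaF v (2 ^ j)) ≠ 0 := by
  have h2j : 2 ^ j < 2 ^ r := Nat.pow_lt_pow_right one_lt_two hj
  rw [Wpoly, eval_prod, Finset.prod_ne_zero_iff]
  intro i hi heq
  rw [Finset.mem_range] at hi
  simp only [eval_sub, eval_X, eval_C, sub_eq_zero] at heq
  exact hi.ne' (omegaF_injOn hv h2j (hi.trans h2j) heq)

theorem Xpoly_eq_prod_bitIndices (v : Fin r → F) {i : ℕ} (hi : i < 2 ^ r) :
    Xpoly v i = ∏ j ∈ i.bitIndices.toFinset,
      C ((Wpoly v j).eval (omegaF v (2 ^ j)))⁻¹ * Wpoly v j := by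
  rw [Xpoly, ← Finset.prod_filter]
  congr 1
  ext j
  simp only [Finset.mem_filter, Finset.mem_range, List.mem_toFinset, Nat.mem_bitIndices,
    and_iff_right_iff_imp]
  exact fun hj => Nat.lt_of_mem_bitIndices hi (Nat.mem_bitIndices.mpr hj)

theorem degree_C_inv_eval_mul_Wpoly [CharP F 2] (hv : LinearIndependent (ZMod 2) v) {j : ℕ}
    (hj : j < r) :
    (C ((Wpoly v j).eval (omegaF v (2 ^ j)))⁻¹ * Wpoly v j).degree = ((2 ^ j : ℕ) : WithBot ℕ) := by
  rw [degree_C_mul (inv_ne_zero (Wpoly_eval_ne_zero hv hj)),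
    degree_eq_natDegree (Wpoly_monic v j).ne_zero, Wpoly_natDegree]

theorem degree_Xpoly [CharP F 2] (hv : LinearIndependent (ZMod 2) v) {i : ℕ} (hi : i < 2 ^ r) :
    (Xpoly v i).degree = i := by
  rw [Xpoly_eq_prod_bitIndices v hi, degree_prod, Finset.sum_congr rfl fun j hj =>
    degree_C_inv_eval_mul_Wpoly hv (Nat.lt_of_mem_bitIndices hi (List.mem_toFinset.mp hj)),
    ← Nat.cast_sum, Finset.sum_toFinset_bitIndices_two_pow]

end NovelPolynomialBasis

theorem statement16_general (r : ℕ) (F : Type*) [Field F] [CharP F 2] (v : Fin r → F)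
    (hv : LinearIndependent (ZMod 2) v) (t : ℕ) (htr : t ≤ r) (l : ℕ) :
    Function.Bijective (fun d : Fin (2 ^ t) → F => fun j : Fin (2 ^ t) =>
      (∑ i : Fin (2 ^ t), Polynomial.C (d i) * Xpoly v (i : ℕ)).eval
        (omegaF v (j : ℕ) + omegaF v l)) := by
  have hlt (i : Fin (2 ^ t)) : (i : ℕ) < 2 ^ r :=
    i.isLt.trans_le (Nat.pow_le_pow_right two_pos htr)
  have hdeg (i : Fin (2 ^ t)) : (Xpoly v i).degree = (i : ℕ) := degree_Xpoly hv (hlt i)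
  refine bijective_eval_sum_C_mul ?_ (fun i => ?_) ?_
  · refine linearIndependent_of_degree_injective (fun i => ?_) fun i j h => ?_
    · exact degree_ne_bot.mp (by simp [hdeg])
    · exact Fin.ext (by simpa [hdeg] using h)
  · rw [natDegree_eq_of_degree_eq_some (hdeg i), Fintype.card_fin]
    exact i.isLt
  · exact fun j j' h => Fin.ext (omegaF_injOn hv (hlt j) (hlt j') (add_right_cancel h))

/-- Invertibility of the transform `Ψ_h^l`: for `h = 2^t` with `1 ≤ t ≤ r`
and any `0 ≤ l < 2^r`, the map `F^h → F^h` sending `(d_0, …, d_{h-1})` to the evaluation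
vector `((Σ_{i<h} d_i · X_i)(ω_j + ω_l))_{j<h}` is bijective. -/
theorem statement16 (r : ℕ) (hr : 1 ≤ r) (F : Type*) [Field F] [Fintype F] [CharP F 2]
    (hcard : Fintype.card F = 2 ^ r) (v : Fin r → F)
    (hv : LinearIndependent (ZMod 2) v) (t : ℕ) (ht1 : 1 ≤ t) (htr : t ≤ r)
    (l : ℕ) (hl : l < 2 ^ r) :
    Function.Bijective (fun d : Fin (2 ^ t) → F => fun j : Fin (2 ^ t) =>
      (∑ i : Fin (2 ^ t), Polynomial.C (d i) * Xpoly v (i : ℕ)).eval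
        (omegaF v (j : ℕ) + omegaF v l)) :=
  statement16_general r F v hv t htr l
end
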